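/- Let w = 2 and let D be a minimal norm representatives digit set modulo τ². Suppose that either p is even and (1/√q + 2/q)²·(q − p²/4 + 1) < 1, or p is odd and (1/√q + 2/q)²·(q − p²/4 + 1/4)²·(q − p²/4)^{−1} < 1. Then D is 2-subadditive. -/

import Mathlib

/-!
Let `R` be a covering radius of the lattice `ℤ[τ]`: half the diagonal of the rectangle with
sides `1` and `|Im τ|`, or, for odd `p`, the circumradius `(Im τ² + 1/4) / (2 |Im τ|)` of the
triangle `0, 1, τ`. The condition on `p` and `q` says exactly that `(√q + 2) R < q / 2`.
Every digit, being of minimal norm modulo `τ²`, has norm at most `q R`.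

For `m ≤ n` the case `n ≥ m + 2` is trivial. Otherwise `z = c + τ^(n-m) d` has norm at most
`(1 + √q) q R`. Write `z = τ^s v` with `τ ∤ v` and `v = e₀ + τ² y` with `e₀ ∈ D`; then
`q ‖y‖ ≤ ‖v‖ + ‖e₀‖ ≤ (2 + √q) q R`, so `‖y‖ < q / 2`. Writing `y = τ^k e₁` with `τ ∤ e₁`,
the element `e₁` is shorter than `q / 2` and hence is its own digit. This gives
`τ^m z = τ^(m+s) e₀ + τ^(m+s+2+k) e₁`.
-/

open Complex

noncomputable section

/-- The lattice `ℤ[τ] = {a + b·τ : a, b ∈ ℤ}` as a subset of `ℂ`. -/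
def Ztau (τ : ℂ) : Set ℂ := {z | ∃ a b : ℤ, z = (a : ℂ) + (b : ℂ) * τ}

/-- `z` is divisible by `τ` in `ℤ[τ]`. -/
def TauDvd (τ : ℂ) (z : ℂ) : Prop := ∃ y ∈ Ztau τ, z = τ * y

/-- `x` is a minimal norm representative modulo `τ^w`: an element of `ℤ[τ]`,
not divisible by `τ`, of minimal norm in its residue class modulo `τ^w`. -/
def MinNormRep (τ : ℂ) (w : ℕ) (x : ℂ) : Prop :=
  x ∈ Ztau τ ∧ ¬ TauDvd τ x ∧
    ∀ y ∈ Ztau τ, ‖x‖ ≤ ‖x - τ ^ w * y‖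

/-- `D` is a minimal norm representatives digit set modulo `τ^w`. -/
def IsMinNormDigitSet (τ : ℂ) (w : ℕ) (D : Set ℂ) : Prop :=
  D ⊆ Ztau τ ∧ (0 : ℂ) ∈ D ∧ (∀ d ∈ D, d ≠ 0 → MinNormRep τ w d) ∧
    ∀ z ∈ Ztau τ, ¬ TauDvd τ z →
      ∃! d, d ∈ D ∧ ∃ y ∈ Ztau τ, z - d = τ ^ w * y

/-- An expansion: a finitely supported sequence of digits. -/
def IsExpansion (D : Set ℂ) (η : ℕ →₀ ℂ) : Prop := ∀ n, η n ∈ D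

/-- The `w`-NAF condition: any two distinct nonzero digits have indices at
distance at least `w`. -/
def IsWNAF (w : ℕ) (η : ℕ →₀ ℂ) : Prop :=
  ∀ m n : ℕ, m ≠ n → η m ≠ 0 → η n ≠ 0 → (w : ℤ) ≤ |(m : ℤ) - (n : ℤ)|

/-- The value of an expansion in base `τ`: `∑ η_n · τ^n`. -/
def evalue (τ : ℂ) (η : ℕ →₀ ℂ) : ℂ := η.sum fun n d => d * τ ^ n

/-- The weight of an expansion: the number of nonzero digits. -/
def eweight (η : ℕ →₀ ℂ) : ℕ := η.support.card

/-- A multi-expansion over the digit set `D`: a finite multiset of pairs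
`(d, n)` with `d ∈ D` nonzero. -/
def IsMultiExpansion (D : Set ℂ) (μ : Multiset (ℂ × ℕ)) : Prop :=
  ∀ x ∈ μ, x.1 ∈ D ∧ x.1 ≠ 0

/-- The value of a multi-expansion in base `τ`: `∑ d · τ^n`. -/
def mvalue (τ : ℂ) (μ : Multiset (ℂ × ℕ)) : ℂ :=
  (μ.map fun x => x.1 * τ ^ x.2).sum

/-- The digit set `D` is `w`-subadditive: the sum of the values of two
singletons has a `w`-NAF-expansion of weight at most `2`. -/
def WSubadditive (τ : ℂ) (w : ℕ) (D : Set ℂ) : Prop :=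
  ∀ c ∈ D, ∀ d ∈ D, c ≠ 0 → d ≠ 0 → ∀ m n : ℕ,
    ∃ η : ℕ →₀ ℂ, IsExpansion D η ∧ IsWNAF w η ∧
      evalue τ η = τ ^ m * c + τ ^ n * d ∧ eweight η ≤ 2

namespace Ztau

variable {τ z y : ℂ}

lemma add_mem (hz : z ∈ Ztau τ) (hy : y ∈ Ztau τ) : z + y ∈ Ztau τ := by
  obtain ⟨a, b, rfl⟩ := hz
  obtain ⟨c, d, rfl⟩ := hy
  exact ⟨a + c, b + d, by push_cast; ring⟩

lemma neg_mem (hz : z ∈ Ztau τ) : -z ∈ Ztau τ := by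
  obtain ⟨a, b, rfl⟩ := hz
  exact ⟨-a, -b, by push_cast; ring⟩

variable {p q : ℤ}

lemma tau_mul_mem (hroot : τ ^ 2 - (p : ℂ) * τ + (q : ℂ) = 0) (hz : z ∈ Ztau τ) :
    τ * z ∈ Ztau τ := by
  obtain ⟨a, b, rfl⟩ := hz
  exact ⟨-(b * q), a + b * p, by push_cast; linear_combination (b : ℂ) * hroot⟩

lemma tau_pow_mul_mem (hroot : τ ^ 2 - (p : ℂ) * τ + (q : ℂ) = 0) (hz : z ∈ Ztau τ) (k : ℕ) :
    τ ^ k * z ∈ Ztau τ := by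
  induction k with
  | zero => simpa using hz
  | succ k ih => simpa [pow_succ', mul_assoc] using tau_mul_mem hroot ih

end Ztau

section Root

variable {p q : ℤ} {τ : ℂ}

lemma re_eq_of_root (hroot : τ ^ 2 - (p : ℂ) * τ + (q : ℂ) = 0) (him : τ.im ≠ 0) :
    τ.re = p / 2 := by
  have h := congrArg Complex.im hroot
  simp only [sub_im, add_im, mul_im, sq, intCast_re, intCast_im, zero_im] at h
  have : (2 * τ.re - p) * τ.im = 0 := by linarith
  linarith [(mul_eq_zero.1 this).resolve_right him]

lemma normSq_eq_of_root (hroot : τ ^ 2 - (p : ℂ) * τ + (q : ℂ) = 0) (him : τ.im ≠ 0) :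
    normSq τ = q := by
  have h := congrArg Complex.re hroot
  simp only [sub_re, add_re, mul_re, sq, intCast_re, intCast_im, zero_re] at h
  rw [normSq_apply]
  linear_combination (-1) * h + 2 * τ.re * re_eq_of_root hroot him

lemma im_sq_eq_of_root (hroot : τ ^ 2 - (p : ℂ) * τ + (q : ℂ) = 0) (him : τ.im ≠ 0) :
    τ.im ^ 2 = q - (p : ℝ) ^ 2 / 4 := by
  have h := normSq_eq_of_root hroot him
  rw [normSq_apply, re_eq_of_root hroot him] at h
  linarith

lemma exists_normSq_eq_natCast (hroot : τ ^ 2 - (p : ℂ) * τ + (q : ℂ) = 0) (him : τ.im ≠ 0)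
    {z : ℂ} (hz : z ∈ Ztau τ) : ∃ n : ℕ, normSq z = n := by
  obtain ⟨a, b, rfl⟩ := hz
  have hN : normSq ((a : ℂ) + b * τ) = ((a ^ 2 + a * b * p + b ^ 2 * q : ℤ) : ℝ) := by
    have hre := re_eq_of_root hroot him
    have hns := normSq_eq_of_root hroot him
    rw [normSq_apply] at hns ⊢
    simp only [add_re, add_im, mul_re, mul_im, intCast_re, intCast_im]
    push_cast
    linear_combination (b : ℝ) ^ 2 * hns + 2 * a * b * hre
  have hnonneg : 0 ≤ a ^ 2 + a * b * p + b ^ 2 * q := by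
    exact_mod_cast hN ▸ normSq_nonneg _
  exact ⟨(a ^ 2 + a * b * p + b ^ 2 * q).toNat, by rw [hN, ← Int.toNat_of_nonneg hnonneg]; rfl⟩

lemma one_le_normSq_of_mem (hroot : τ ^ 2 - (p : ℂ) * τ + (q : ℂ) = 0) (him : τ.im ≠ 0)
    {z : ℂ} (hz : z ∈ Ztau τ) (hz0 : z ≠ 0) : 1 ≤ normSq z := by
  obtain ⟨n, hn⟩ := exists_normSq_eq_natCast hroot him hz
  have : 0 < n := by exact_mod_cast hn ▸ normSq_pos.2 hz0
  rw [hn]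
  exact_mod_cast this

lemma one_le_norm_of_mem (hroot : τ ^ 2 - (p : ℂ) * τ + (q : ℂ) = 0) (him : τ.im ≠ 0)
    {z : ℂ} (hz : z ∈ Ztau τ) (hz0 : z ≠ 0) : 1 ≤ ‖z‖ := by
  have := one_le_normSq_of_mem hroot him hz hz0
  rw [normSq_eq_norm_sq] at this
  nlinarith [norm_nonneg z]

/-- Dividing out `τ` lowers the integral norm, so the extraction terminates. -/
lemma exists_eq_tau_pow_mul (hroot : τ ^ 2 - (p : ℂ) * τ + (q : ℂ) = 0) (him : τ.im ≠ 0)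
    (hτ : 1 < ‖τ‖) {z : ℂ} (hz : z ∈ Ztau τ) (hz0 : z ≠ 0) :
    ∃ (s : ℕ) (v : ℂ), v ∈ Ztau τ ∧ ¬ TauDvd τ v ∧ z = τ ^ s * v := by
  obtain ⟨n, hn⟩ := exists_normSq_eq_natCast hroot him hz
  induction n using Nat.strong_induction_on generalizing z with
  | _ n ih =>
  by_cases hdvd : TauDvd τ z
  · obtain ⟨y, hy, rfl⟩ := hdvd
    have hy0 : y ≠ 0 := right_ne_zero_of_mul hz0
    obtain ⟨m, hm⟩ := exists_normSq_eq_natCast hroot him hy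
    have hmn : m < n := by
      have h1 := one_le_normSq_of_mem hroot him hy hy0
      have hτ2 : 1 < normSq τ := by rw [normSq_eq_norm_sq]; nlinarith
      rw [normSq_mul, hm] at hn
      rw [hm] at h1
      exact_mod_cast (show (m : ℝ) < n by nlinarith)
    obtain ⟨s, v, hv, hvnd, rfl⟩ := ih m hmn hy hy0 hm
    exact ⟨s + 1, v, hv, hvnd, by ring⟩
  · exact ⟨0, z, hz, hdvd, by ring⟩

end Root

def CoversWithin (τ : ℂ) (R : ℝ) : Prop := ∀ z : ℂ, ∃ w ∈ Ztau τ, ‖z - w‖ ≤ R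

lemma norm_le_of_sq_add_sq_le {u : ℂ} {R : ℝ} (hR : 0 ≤ R) (h : u.re ^ 2 + u.im ^ 2 ≤ R ^ 2) :
    ‖u‖ ≤ R := by
  rw [norm_def, Real.sqrt_le_left hR, normSq_apply]
  linarith

lemma sub_lattice_re (τ z : ℂ) (a b : ℤ) : (z - (a + b * τ)).re = z.re - b * τ.re - a := by
  simp only [sub_re, add_re, intCast_re, mul_re, intCast_im, zero_mul, sub_zero]
  ring

lemma sub_lattice_im (τ z : ℂ) (a b : ℤ) : (z - (a + b * τ)).im = z.im - b * τ.im := by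
  simp

lemma coversWithin_half_diagonal {τ : ℂ} (him : τ.im ≠ 0) : CoversWithin τ (√(1 + τ.im ^ 2) / 2) := by
  intro z
  set b := round (z.im / τ.im)
  set a := round (z.re - b * τ.re)
  refine ⟨a + b * τ, ⟨a, b, rfl⟩, norm_le_of_sq_add_sq_le (by positivity) ?_⟩
  have hre : |z.re - b * τ.re - a| ≤ 1 / 2 := abs_sub_round _
  have him' : |z.im / τ.im - b| ≤ 1 / 2 := abs_sub_round _
  have him_eq : z.im - b * τ.im = τ.im * (z.im / τ.im - b) := by field_simp
  rw [sub_lattice_re, sub_lattice_im, him_eq, mul_pow, div_pow, Real.sq_sqrt (by positivity)]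
  have h1 := sq_le_sq' (abs_le.1 hre).1 (abs_le.1 hre).2
  have h2 := sq_le_sq' (abs_le.1 him').1 (abs_le.1 him').2
  nlinarith [sq_nonneg τ.im]

/-- The disc of radius `R = (h² + 1/4) / (2h)` about the origin contains the part of
`[0, 1/2] × [0, ∞)` below the perpendicular bisector of `(0, 0)` and `(1/2, h)`. -/
lemma sq_add_sq_le_of_add_le {r t h : ℝ} (hh : 0 < h) (hr0 : 0 ≤ r) (hr : r ≤ 1 / 2)
    (ht : 0 ≤ t) (hrt : r + 2 * h * t ≤ h ^ 2 + 1 / 4) :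
    r ^ 2 + t ^ 2 ≤ ((h ^ 2 + 1 / 4) / (2 * h)) ^ 2 := by
  rw [div_pow, le_div_iff₀ (by positivity)]
  have ht2 : (2 * h * t) ^ 2 ≤ (h ^ 2 + 1 / 4 - r) ^ 2 :=
    pow_le_pow_left₀ (by positivity) (by linarith) 2
  -- what remains after `ht2` is `(4h² + 1) r (r - 1/2) ≤ 0`
  nlinarith [mul_nonneg (mul_nonneg hr0 (by linarith : (0 : ℝ) ≤ 1 / 2 - r)) (sq_nonneg h)]

/-- The rectangle `[0, 1] × [0, h]` is covered by the discs of radius `(h² + 1/4) / (2h)`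
about `(0, 0)`, `(1, 0)` and `(1/2, h)`. -/
lemma triangle_cover {f t h : ℝ} (hh : 0 < h) (hf0 : 0 ≤ f) (hf1 : f ≤ 1) (ht0 : 0 ≤ t)
    (hth : t ≤ h) :
    f ^ 2 + t ^ 2 ≤ ((h ^ 2 + 1 / 4) / (2 * h)) ^ 2 ∨
      (f - 1) ^ 2 + t ^ 2 ≤ ((h ^ 2 + 1 / 4) / (2 * h)) ^ 2 ∨
      (f - 1 / 2) ^ 2 + (t - h) ^ 2 ≤ ((h ^ 2 + 1 / 4) / (2 * h)) ^ 2 := by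
  wlog hf : f ≤ 1 / 2 generalizing f
  · rcases this (f := 1 - f) (by linarith) (by linarith) (by linarith) with h' | h' | h'
    · exact Or.inr (Or.inl (by linarith [h']))
    · exact Or.inl (by linarith [h'])
    · exact Or.inr (Or.inr (by linarith [h']))
  by_cases hrt : f + 2 * h * t ≤ h ^ 2 + 1 / 4
  · exact Or.inl (sq_add_sq_le_of_add_le hh hf0 hf ht0 hrt)
  · have := sq_add_sq_le_of_add_le (r := 1 / 2 - f) (t := h - t) hh (by linarith) (by linarith)
      (by linarith) (by nlinarith)
    exact Or.inr (Or.inr (by linarith [this]))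

lemma coversWithin_circumradius {τ : ℂ} (him : τ.im ≠ 0) {l : ℤ} (hre : τ.re = l + 1 / 2) :
    CoversWithin τ ((τ.im ^ 2 + 1 / 4) / (2 * |τ.im|)) := by
  intro z
  set b := ⌊z.im / τ.im⌋
  set θ := Int.fract (z.im / τ.im)
  set a := ⌊z.re - b * τ.re⌋
  set f := Int.fract (z.re - b * τ.re)
  have hh : 0 < |τ.im| := abs_pos.2 him
  have him_eq : z.im - b * τ.im = θ * τ.im := by
    simp only [θ, b, Int.fract]; field_simp
  have hsq : (θ * τ.im) ^ 2 = (θ * |τ.im|) ^ 2 := by rw [mul_pow, mul_pow, sq_abs]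
  have hsq' : ((θ - 1) * τ.im) ^ 2 = (θ * |τ.im| - |τ.im|) ^ 2 := by
    rw [mul_pow, ← sq_abs τ.im]
    ring
  have hR : 0 ≤ (τ.im ^ 2 + 1 / 4) / (2 * |τ.im|) := by positivity
  have hf : z.re - b * τ.re - a = f := Int.self_sub_floor _
  rcases triangle_cover (f := f) (t := θ * |τ.im|) hh (Int.fract_nonneg _)
      (Int.fract_lt_one _).le (mul_nonneg (Int.fract_nonneg _) hh.le)
      (mul_le_of_le_one_left hh.le (Int.fract_lt_one _).le) with h | h | h <;>
    rw [sq_abs] at h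
  · refine ⟨a + b * τ, ⟨a, b, rfl⟩, norm_le_of_sq_add_sq_le hR ?_⟩
    rw [sub_lattice_re, sub_lattice_im, him_eq, hsq]
    rwa [hf]
  · refine ⟨(a + 1 : ℤ) + b * τ, ⟨a + 1, b, rfl⟩, norm_le_of_sq_add_sq_le hR ?_⟩
    rw [sub_lattice_re, sub_lattice_im, him_eq, hsq]
    convert h using 3
    push_cast; linarith
  · refine ⟨(a - l : ℤ) + (b + 1 : ℤ) * τ, ⟨a - l, b + 1, rfl⟩, norm_le_of_sq_add_sq_le hR ?_⟩
    rw [sub_lattice_re, sub_lattice_im]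
    have e : z.im - ((b + 1 : ℤ) : ℝ) * τ.im = (θ - 1) * τ.im := by push_cast; linarith
    rw [e, hsq']
    convert h using 3
    push_cast; linarith

/-- `1/2` is at distance at least `1/2` from `ℤ[τ]`, since `1 - 2w` is a nonzero lattice point. -/
lemma CoversWithin.half_le {p q : ℤ} {τ : ℂ} (hroot : τ ^ 2 - (p : ℂ) * τ + (q : ℂ) = 0)
    (him : τ.im ≠ 0) {R : ℝ} (hcov : CoversWithin τ R) : 1 / 2 ≤ R := by
  obtain ⟨w, ⟨a, b, rfl⟩, hw⟩ := hcov (1 / 2)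
  have hmem : 1 - 2 * ((a : ℂ) + b * τ) ∈ Ztau τ := ⟨1 - 2 * a, -2 * b, by push_cast; ring⟩
  have hne : 1 - 2 * ((a : ℂ) + b * τ) ≠ 0 := by
    intro h
    have him0 := congrArg Complex.im h
    have hb : (b : ℝ) = 0 := by simpa [him] using him0
    have hre0 := congrArg Complex.re h
    simp only [sub_re, one_re, mul_re, add_re, intCast_re, intCast_im, hb, re_ofNat, im_ofNat,
      zero_re] at hre0
    have : (1 : ℤ) = 2 * a := by exact_mod_cast (by linarith : (1 : ℝ) = 2 * a)
    omega
  have h1 := one_le_norm_of_mem hroot him hmem hne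
  have h2 : 1 - 2 * ((a : ℂ) + b * τ) = 2 * (1 / 2 - (a + b * τ)) := by ring
  rw [h2, norm_mul, Complex.norm_two] at h1
  linarith

namespace IsMinNormDigitSet

variable {τ : ℂ} {w : ℕ} {D : Set ℂ}

lemma norm_le_norm_sub (hD : IsMinNormDigitSet τ w D) {d y : ℂ} (hd : d ∈ D)
    (hy : y ∈ Ztau τ) : ‖d‖ ≤ ‖d - τ ^ w * y‖ := by
  by_cases hd0 : d = 0
  · rw [hd0, norm_zero]
    exact norm_nonneg _
  · exact (hD.2.2.1 d hd hd0).2.2 y hy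

lemma norm_le (hD : IsMinNormDigitSet τ w D) (hτ : τ ≠ 0) {R : ℝ} (hcov : CoversWithin τ R)
    {d : ℂ} (hd : d ∈ D) : ‖d‖ ≤ ‖τ‖ ^ w * R := by
  obtain ⟨y, hy, hdy⟩ := hcov (d / τ ^ w)
  calc ‖d‖ ≤ ‖d - τ ^ w * y‖ := hD.norm_le_norm_sub hd hy
    _ = ‖τ ^ w * (d / τ ^ w - y)‖ := by rw [mul_sub, mul_div_cancel₀ _ (pow_ne_zero _ hτ)]
    _ ≤ ‖τ‖ ^ w * R := by
      rw [norm_mul, norm_pow]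
      exact mul_le_mul_of_nonneg_left hdy (by positivity)

variable {p q : ℤ}

/-- The digit `d` of `z` has `‖d‖ ≤ ‖z‖`, so `z - d`, a multiple of `τ ^ w`, is shorter than
`‖τ‖ ^ w` and hence zero. -/
lemma mem_of_norm_lt (hroot : τ ^ 2 - (p : ℂ) * τ + (q : ℂ) = 0) (him : τ.im ≠ 0)
    (hD : IsMinNormDigitSet τ w D) {z : ℂ} (hz : z ∈ Ztau τ) (hnd : ¬ TauDvd τ z)
    (hlt : ‖z‖ < ‖τ‖ ^ w / 2) : z ∈ D := by
  obtain ⟨d, ⟨hd, y, hy, hzd⟩, -⟩ := hD.2.2.2 z hz hnd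
  obtain rfl | hy0 := eq_or_ne y 0
  · rwa [show z = d by simpa [sub_eq_zero] using hzd]
  have hdz : ‖d‖ ≤ ‖z‖ := by
    simpa [← hzd] using hD.norm_le_norm_sub hd (Ztau.neg_mem hy)
  have hy1 := one_le_norm_of_mem hroot him hy hy0
  have : ‖τ‖ ^ w ≤ ‖z - d‖ := by
    rw [hzd, norm_mul, norm_pow]
    exact le_mul_of_one_le_right (by positivity) hy1
  linarith [norm_sub_le z d]

lemma exists_eq_tau_pow_mul_mem (hroot : τ ^ 2 - (p : ℂ) * τ + (q : ℂ) = 0) (him : τ.im ≠ 0)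
    (hD : IsMinNormDigitSet τ w D) (hτ : 1 < ‖τ‖) {z : ℂ} (hz : z ∈ Ztau τ) (hz0 : z ≠ 0)
    (hlt : ‖z‖ < ‖τ‖ ^ w / 2) : ∃ (k : ℕ) (d : ℂ), d ∈ D ∧ z = τ ^ k * d := by
  obtain ⟨k, v, hv, hvnd, rfl⟩ := exists_eq_tau_pow_mul hroot him hτ hz hz0
  refine ⟨k, v, hD.mem_of_norm_lt hroot him hv hvnd (lt_of_le_of_lt ?_ hlt), rfl⟩
  rw [norm_mul, norm_pow]
  exact le_mul_of_one_le_left (norm_nonneg v) (one_le_pow₀ hτ.le)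

/-- Split off the digit of the `τ`-free part `v` of `z`: `v = e₀ + τ ^ w y`, and `y` is short
enough to be a power of `τ` times a digit. -/
lemma exists_eq_add (hroot : τ ^ 2 - (p : ℂ) * τ + (q : ℂ) = 0) (him : τ.im ≠ 0)
    (hD : IsMinNormDigitSet τ w D) (hτ : 1 < ‖τ‖) {R : ℝ} (hcov : CoversWithin τ R)
    {z : ℂ} (hz : z ∈ Ztau τ) (hlt : ‖z‖ + ‖τ‖ ^ w * R < ‖τ‖ ^ w * ‖τ‖ ^ w / 2) :
    ∃ (a b : ℕ) (e₀ e₁ : ℂ), e₀ ∈ D ∧ e₁ ∈ D ∧ a + w ≤ b ∧ z = τ ^ a * e₀ + τ ^ b * e₁ := by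
  obtain rfl | hz0 := eq_or_ne z 0
  · exact ⟨0, w, 0, 0, hD.2.1, hD.2.1, by omega, by simp⟩
  have hτ0 : τ ≠ 0 := norm_pos_iff.1 (zero_lt_one.trans hτ)
  obtain ⟨s, v, hv, hvnd, rfl⟩ := exists_eq_tau_pow_mul hroot him hτ hz hz0
  obtain ⟨e₀, ⟨he₀, y, hy, hvy⟩, -⟩ := hD.2.2.2 v hv hvnd
  obtain rfl | hy0 := eq_or_ne y 0
  · obtain rfl : v = e₀ := by simpa [sub_eq_zero] using hvy
    exact ⟨s, s + w, v, 0, he₀, hD.2.1, le_rfl, by ring⟩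
  have hvz : ‖v‖ ≤ ‖τ ^ s * v‖ := by
    rw [norm_mul, norm_pow]
    exact le_mul_of_one_le_left (norm_nonneg v) (one_le_pow₀ hτ.le)
  have hyv : ‖τ‖ ^ w * ‖y‖ ≤ ‖v‖ + ‖e₀‖ := by
    rw [← norm_pow, ← norm_mul, ← hvy]
    exact norm_sub_le v e₀
  have hyR : ‖y‖ < ‖τ‖ ^ w / 2 := by
    have hτw : 0 < ‖τ‖ ^ w := by positivity
    nlinarith [hD.norm_le hτ0 hcov he₀]
  obtain ⟨k, d, hd, rfl⟩ := hD.exists_eq_tau_pow_mul_mem hroot him hτ hy hy0 hyR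
  exact ⟨s, s + w + k, e₀, d, he₀, hd, by omega, by linear_combination τ ^ s * hvy⟩

end IsMinNormDigitSet

lemma exists_wnaf_eq_add {τ : ℂ} {D : Set ℂ} (h0 : (0 : ℂ) ∈ D) {w a b : ℕ} {c d : ℂ}
    (hc : c ∈ D) (hd : d ∈ D) (hw : w ≠ 0) (hab : a + w ≤ b) :
    ∃ η : ℕ →₀ ℂ, IsExpansion D η ∧ IsWNAF w η ∧ evalue τ η = τ ^ a * c + τ ^ b * d ∧
      eweight η ≤ 2 := by
  classical
  have hsupp : (Finsupp.single a c + Finsupp.single b d).support ⊆ {a, b} :=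
    Finsupp.support_add.trans (Finset.union_subset_union Finsupp.support_single_subset
      Finsupp.support_single_subset)
  refine ⟨Finsupp.single a c + Finsupp.single b d, fun n => ?_, fun m n hmn hm hn => ?_, ?_, ?_⟩
  · simp only [Finsupp.add_apply, Finsupp.single_apply]
    split_ifs <;> first | omega | simpa
  · have hm' := Finset.mem_insert.1 (hsupp (Finsupp.mem_support_iff.2 hm))
    have hn' := Finset.mem_insert.1 (hsupp (Finsupp.mem_support_iff.2 hn))
    rw [Finset.mem_singleton] at hm' hn'
    rw [le_abs]
    omega
  · rw [evalue, Finsupp.sum_add_index' (fun _ => zero_mul _) (fun _ _ _ => add_mul _ _ _),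
      Finsupp.sum_single_index (zero_mul _), Finsupp.sum_single_index (zero_mul _)]
    ring
  · exact (Finset.card_le_card hsupp).trans Finset.card_le_two

theorem wsubadditive_two_of_coversWithin {p q : ℤ} {τ : ℂ}
    (hroot : τ ^ 2 - (p : ℂ) * τ + (q : ℂ) = 0) (him : τ.im ≠ 0) {D : Set ℂ}
    (hD : IsMinNormDigitSet τ 2 D) {R : ℝ} (hcov : CoversWithin τ R)
    (hK : (‖τ‖ + 2) * R < ‖τ‖ ^ 2 / 2) : WSubadditive τ 2 D := by
  have hR := hcov.half_le hroot him
  have hτ : 1 < ‖τ‖ := by nlinarith [norm_nonneg τ]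
  have hτ0 : τ ≠ 0 := norm_pos_iff.1 (zero_lt_one.trans hτ)
  rintro c hc d hd - - m n
  wlog hmn : m ≤ n generalizing c d m n
  · obtain ⟨η, hη, hnaf, hval, hwt⟩ := this d hd c hc n m (by omega)
    exact ⟨η, hη, hnaf, by rw [hval]; ring, hwt⟩
  obtain ⟨j, rfl⟩ := Nat.exists_eq_add_of_le hmn
  obtain hj | hj := lt_or_ge j 2
  · have hsum : ‖c + τ ^ j * d‖ ≤ (1 + ‖τ‖) * (‖τ‖ ^ 2 * R) :=
      calc ‖c + τ ^ j * d‖ ≤ ‖c‖ + ‖τ‖ ^ j * ‖d‖ := by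
            rw [← norm_pow, ← norm_mul]
            exact norm_add_le _ _
        _ ≤ ‖τ‖ ^ 2 * R + ‖τ‖ * (‖τ‖ ^ 2 * R) := by
            gcongr
            · exact hD.norm_le hτ0 hcov hc
            · simpa using pow_le_pow_right₀ hτ.le (by omega : j ≤ 1)
            · exact hD.norm_le hτ0 hcov hd
        _ = (1 + ‖τ‖) * (‖τ‖ ^ 2 * R) := by ring
    have hz := Ztau.add_mem (hD.1 hc) (Ztau.tau_pow_mul_mem hroot (hD.1 hd) j)
    obtain ⟨a, b, e₀, e₁, he₀, he₁, hab, heq⟩ := hD.exists_eq_add hroot him hτ hcov hz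
      (by nlinarith [mul_lt_mul_of_pos_left hK (by positivity : 0 < ‖τ‖ ^ 2)])
    obtain ⟨η, hη, hnaf, hval, hwt⟩ := exists_wnaf_eq_add (τ := τ) hD.2.1 he₀ he₁ two_ne_zero
      (show m + a + 2 ≤ m + b by omega)
    exact ⟨η, hη, hnaf, by rw [hval]; linear_combination (-τ ^ m) * heq, hwt⟩
  · exact exists_wnaf_eq_add hD.2.1 hc hd two_ne_zero (by omega)

lemma add_two_mul_lt_of_sq_lt {s R : ℝ} (hs : 0 < s)
    (h : (1 / s + 2 / s ^ 2) ^ 2 * (2 * R) ^ 2 < 1) : (s + 2) * R < s ^ 2 / 2 := by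
  rw [← mul_pow, sq_lt_one_iff_abs_lt_one] at h
  have h' := (le_abs_self _).trans_lt h
  have e : (1 / s + 2 / s ^ 2) * (2 * R) = (s + 2) * R * 2 / s ^ 2 := by field_simp
  rw [e, div_lt_one (by positivity)] at h'
  linarith

theorem wsubadditive_w2_general (p q : ℤ) (τ : ℂ)
    (hroot : τ ^ 2 - (p : ℂ) * τ + (q : ℂ) = 0)
    (him : τ.im ≠ 0)
    (hcond :
      (Even p ∧
        (1 / Real.sqrt q + 2 / (q : ℝ)) ^ 2 * ((q : ℝ) - (p : ℝ) ^ 2 / 4 + 1) < 1)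
      ∨
      (Odd p ∧
        (1 / Real.sqrt q + 2 / (q : ℝ)) ^ 2 *
          ((q : ℝ) - (p : ℝ) ^ 2 / 4 + 1 / 4) ^ 2 *
          ((q : ℝ) - (p : ℝ) ^ 2 / 4)⁻¹ < 1))
    (D : Set ℂ) (hD : IsMinNormDigitSet τ 2 D) :
    WSubadditive τ 2 D := by
  have hnorm : ‖τ‖ = Real.sqrt q := by rw [norm_def, normSq_eq_of_root hroot him]
  have hq : (q : ℝ) = ‖τ‖ ^ 2 := by rw [Complex.sq_norm, normSq_eq_of_root hroot him]
  have hτ0 : 0 < ‖τ‖ := norm_pos_iff.2 fun h => him (by simp [h])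
  rw [← im_sq_eq_of_root hroot him, ← hnorm, hq] at hcond
  obtain ⟨R, hcov, hR⟩ : ∃ R, CoversWithin τ R ∧
      (1 / ‖τ‖ + 2 / ‖τ‖ ^ 2) ^ 2 * (2 * R) ^ 2 < 1 := by
    rcases hcond with ⟨-, h⟩ | ⟨⟨l, hl⟩, h⟩
    · refine ⟨_, coversWithin_half_diagonal him, ?_⟩
      rwa [mul_div_cancel₀ _ two_ne_zero, Real.sq_sqrt (by positivity), add_comm 1]
    · have hre : τ.re = l + 1 / 2 := by rw [re_eq_of_root hroot him, hl]; push_cast; ring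
      refine ⟨_, coversWithin_circumradius him hre, ?_⟩
      convert h using 1
      field_simp
      rw [sq_abs]
  exact wsubadditive_two_of_coversWithin hroot him hD hcov (add_two_mul_lt_of_sq_lt hτ0 hR)

/-- For `w = 2`: under the stated inequality on `p` and `q`, the minimal norm
representatives digit set modulo `τ²` is `2`-subadditive. -/
theorem wsubadditive_w2 (p q : ℤ) (τ : ℂ)
    (hpq : p ^ 2 < 4 * q)
    (hroot : τ ^ 2 - (p : ℂ) * τ + (q : ℂ) = 0)
    (him : τ.im ≠ 0)
    (hcond :
      (Even p ∧
        (1 / Real.sqrt q + 2 / (q : ℝ)) ^ 2 * ((q : ℝ) - (p : ℝ) ^ 2 / 4 + 1) < 1)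
      ∨
      (Odd p ∧
        (1 / Real.sqrt q + 2 / (q : ℝ)) ^ 2 *
          ((q : ℝ) - (p : ℝ) ^ 2 / 4 + 1 / 4) ^ 2 *
          ((q : ℝ) - (p : ℝ) ^ 2 / 4)⁻¹ < 1))
    (D : Set ℂ) (hD : IsMinNormDigitSet τ 2 D) :
    WSubadditive τ 2 D :=
  wsubadditive_w2_general p q τ hroot him hcond D hD
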